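/- arXiv:1705.03333 — 4 statements merged into one kernel-verified Lean document; each statement's English description precedes it below -/
import Mathlib

section
/- Let p in (1, infinity), lambda > 0 and x_0 in R. There is no twice continuously differentiable function u : [x_0, infinity) -> R such that the integral of |u(x)|^p over [x_0, infinity) is finite and u''(x) <= lambda * u(x) - 1/(2*lambda) for all x >= x_0. -/
/-!
Integrating `u'' ≤ λ u - c` (with `c = 1/(2λ)`) once gives
`u'(s) ≤ u'(x₀) + λ ∫_{x₀}^s u - c (s - x₀)`. Since `|t| ≤ δ + δ^{1-p} |t|^p`, the integral of an
`L^p` function over `[x₀, s]` grows at most like `δ (s - x₀)` plus a constant, for every `δ > 0`;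
taking `δ = c/(2λ)` shows `u'(s) → -∞`. Hence `u(s) → -∞`, so `|u|^p → ∞` is not integrable.
-/

open MeasureTheory Set Filter

lemma abs_le_add_rpow_mul_abs_rpow {p δ : ℝ} (hp : 1 ≤ p) (hδ : 0 < δ) (t : ℝ) :
    |t| ≤ δ + δ ^ (1 - p) * |t| ^ p := by
  rcases le_or_gt |t| δ with hle | hlt
  · have : 0 ≤ δ ^ (1 - p) * |t| ^ p := by positivity
    linarith
  · have ht : 0 < |t| := hδ.trans hlt
    calc |t| = |t| ^ (1 - p) * |t| ^ p := by rw [← Real.rpow_add ht]; simp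
      _ ≤ δ ^ (1 - p) * |t| ^ p := by
        gcongr ?_ * _
        exact Real.rpow_le_rpow_of_nonpos hδ hlt.le (by linarith)
      _ ≤ δ + δ ^ (1 - p) * |t| ^ p := le_add_of_nonneg_left hδ.le

lemma intervalIntegral_le_mul_add_of_integrableOn_rpow {f : ℝ → ℝ} {a b p δ : ℝ} (hp : 1 ≤ p)
    (hδ : 0 < δ) (hab : a ≤ b) (hf : IntervalIntegrable f volume a b)
    (hfp : IntegrableOn (fun x => |f x| ^ p) (Ici a)) :
    ∫ x in a..b, f x ≤ δ * (b - a) + δ ^ (1 - p) * ∫ x in Ici a, |f x| ^ p := by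
  have hfp_ab : IntervalIntegrable (fun x => |f x| ^ p) volume a b :=
    (intervalIntegrable_iff_integrableOn_Icc_of_le hab).2 (hfp.mono_set Icc_subset_Ici_self)
  calc ∫ x in a..b, f x ≤ ∫ x in a..b, (δ + δ ^ (1 - p) * |f x| ^ p) :=
        intervalIntegral.integral_mono_on hab hf (intervalIntegrable_const.add
          (hfp_ab.const_mul _))
          fun x _ => (le_abs_self _).trans (abs_le_add_rpow_mul_abs_rpow hp hδ _)
    _ = δ * (b - a) + δ ^ (1 - p) * ∫ x in a..b, |f x| ^ p := by
        rw [intervalIntegral.integral_add intervalIntegrable_const (hfp_ab.const_mul _),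
          intervalIntegral.integral_const, intervalIntegral.integral_const_mul, smul_eq_mul]
        ring
    _ ≤ δ * (b - a) + δ ^ (1 - p) * ∫ x in Ici a, |f x| ^ p := by
        gcongr
        rw [intervalIntegral.integral_of_le hab]
        exact setIntegral_mono_set hfp (Eventually.of_forall fun x => by positivity)
          (Ioc_subset_Ioi_self.trans Ioi_subset_Ici_self).eventuallyLE

lemma sub_le_integral_of_hasDerivWithinAt_Ici {g g' φ : ℝ → ℝ} {a b : ℝ} (hab : a ≤ b)
    (hg : ∀ x ∈ Ici a, HasDerivWithinAt g (g' x) (Ici a) x) (hφ : IntegrableOn φ (Icc a b))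
    (hle : ∀ x ∈ Ioo a b, g' x ≤ φ x) :
    g b - g a ≤ ∫ y in a..b, φ y :=
  intervalIntegral.sub_le_integral_of_hasDeriv_right_of_le hab
    (fun x hx => (hg x hx.1).continuousWithinAt.mono Icc_subset_Ici_self)
    (fun x hx => (hg x hx.1.le).mono (Ioi_subset_Ici_self.trans (Ici_subset_Ici.2 hx.1.le)))
    hφ hle

lemma tendsto_atBot_of_le_sub_mul {f : ℝ → ℝ} {a C k : ℝ} (hk : 0 < k)
    (hf : ∀ s ∈ Ici a, f s ≤ C - k * (s - a)) : Tendsto f atTop atBot := by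
  refine tendsto_atBot_mono' _ (eventually_ge_atTop a |>.mono hf) ?_
  exact tendsto_atBot_add_const_left _ C <| tendsto_neg_atTop_atBot.comp <|
    (tendsto_atTop_add_const_right _ (-a) tendsto_id).const_mul_atTop hk

lemma tendsto_atBot_of_hasDerivWithinAt_Ici {f f' : ℝ → ℝ} {a : ℝ}
    (hf : ∀ x ∈ Ici a, HasDerivWithinAt f (f' x) (Ici a) x) (hf' : Tendsto f' atTop atBot) :
    Tendsto f atTop atBot := by
  obtain ⟨S, hS⟩ := eventually_atTop.1 (hf'.eventually_le_atBot (-1))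
  set T := max a S
  have hfT : ∀ x ∈ Ici T, HasDerivWithinAt f (f' x) (Ici T) x := fun x hx =>
    (hf x (mem_Ici.2 ((le_max_left _ _).trans hx))).mono (Ici_subset_Ici.2 (le_max_left _ _))
  refine tendsto_atBot_of_le_sub_mul (a := T) (C := f T) one_pos fun s hs => ?_
  have := sub_le_integral_of_hasDerivWithinAt_Ici hs hfT
    (continuous_const.integrableOn_Icc (f := fun _ => (-1 : ℝ)))
    fun x hx => hS x ((le_max_right _ _).trans hx.1.le)
  rw [intervalIntegral.integral_const, smul_eq_mul] at this
  linarith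

lemma hasDerivWithinAt_derivWithin_of_contDiffOn_two {u : ℝ → ℝ} {s : Set ℝ} {x : ℝ}
    (hs : UniqueDiffOn ℝ s) (hu : ContDiffOn ℝ 2 u s) (hx : x ∈ s) :
    HasDerivWithinAt (derivWithin u s) (iteratedDerivWithin 2 u s x) s x := by
  rw [iteratedDerivWithin_succ, iteratedDerivWithin_one]
  exact ((hu.derivWithin hs le_rfl).differentiableOn one_ne_zero x hx).hasDerivWithinAt

lemma not_integrableOn_Ici_of_tendsto_atTop {g : ℝ → ℝ} {a : ℝ} (hg : Tendsto g atTop atTop) :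
    ¬ IntegrableOn g (Ici a) := by
  intro hint
  obtain ⟨R, hR⟩ := eventually_atTop.1 (hg.eventually_ge_atTop 1)
  have hone : IntegrableOn (fun _ => (1 : ℝ)) (Ici (max a R)) :=
    (hint.mono_set (Ici_subset_Ici.2 (le_max_left _ _))).mono' aestronglyMeasurable_const
      ((ae_restrict_mem measurableSet_Ici).mono fun x hx => by
        simpa using hR x ((le_max_right _ _).trans hx))
  simp [integrableOn_const_iff, Real.volume_Ici] at hone

lemma tendsto_derivWithin_atBot_of_iteratedDerivWithin_le {u : ℝ → ℝ} {a p lam c : ℝ}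
    (hp : 1 ≤ p) (hlam : 0 < lam) (hc : 0 < c) (hu : ContDiffOn ℝ 2 u (Ici a))
    (hint : IntegrableOn (fun x => |u x| ^ p) (Ici a))
    (hineq : ∀ x ∈ Ici a, iteratedDerivWithin 2 u (Ici a) x ≤ lam * u x - c) :
    Tendsto (derivWithin u (Ici a)) atTop atBot := by
  -- with this `δ` the `L^p` part of `u` cancels half of the drift `-c`
  set δ := c / (2 * lam)
  have hδ : 0 < δ := by positivity
  set I := ∫ x in Ici a, |u x| ^ p
  refine tendsto_atBot_of_le_sub_mul (a := a) (C := derivWithin u (Ici a) a + lam * δ ^ (1 - p) * I)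
    (half_pos hc) fun s hs => ?_
  have hu_cont : ContinuousOn u (Icc a s) := hu.continuousOn.mono Icc_subset_Ici_self
  have hu_int : IntervalIntegrable u volume a s := hu_cont.intervalIntegrable_of_Icc hs
  have hderiv := sub_le_integral_of_hasDerivWithinAt_Ici (φ := fun y => lam * u y - c) hs
    (fun x hx => hasDerivWithinAt_derivWithin_of_contDiffOn_two (uniqueDiffOn_Ici a) hu hx)
    ((continuousOn_const.mul hu_cont).sub continuousOn_const).integrableOn_Icc
    fun x hx => hineq x (mem_Ici.2 hx.1.le)
  calc derivWithin u (Ici a) s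
      ≤ derivWithin u (Ici a) a + ∫ y in a..s, (lam * u y - c) := by linarith
    _ = derivWithin u (Ici a) a + lam * (∫ y in a..s, u y) - c * (s - a) := by
        rw [intervalIntegral.integral_sub (hu_int.const_mul lam) intervalIntegrable_const,
          intervalIntegral.integral_const_mul, intervalIntegral.integral_const, smul_eq_mul]
        ring
    _ ≤ derivWithin u (Ici a) a + lam * (δ * (s - a) + δ ^ (1 - p) * I) - c * (s - a) := by
        gcongr
        exact intervalIntegral_le_mul_add_of_integrableOn_rpow hp hδ hs hu_int hint
    _ = derivWithin u (Ici a) a + lam * δ ^ (1 - p) * I - c / 2 * (s - a) := by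
        simp only [δ]
        field_simp
        ring

/-- There is no `C²` function `u` on `[x₀, ∞)` with `∫_{x₀}^∞ |u|^p < ∞` satisfying the
differential inequality `u'' ≤ λ u - 1/(2λ)` on `[x₀, ∞)`. -/
theorem no_Lp_solution_of_diff_ineq (p : ℝ) (hp : 1 < p) (lam : ℝ) (hlam : 0 < lam)
    (x₀ : ℝ) :
    ¬ ∃ u : ℝ → ℝ,
        ContDiffOn ℝ 2 u (Ici x₀) ∧
        IntegrableOn (fun x => |u x| ^ p) (Ici x₀) volume ∧
        ∀ x ∈ Ici x₀,
          iteratedDerivWithin 2 u (Ici x₀) x ≤ lam * u x - 1 / (2 * lam) := by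
  rintro ⟨u, hu, hint, hineq⟩
  have hu' : Tendsto (derivWithin u (Ici x₀)) atTop atBot :=
    tendsto_derivWithin_atBot_of_iteratedDerivWithin_le hp.le hlam (by positivity) hu hint hineq
  have hu_atBot : Tendsto u atTop atBot := tendsto_atBot_of_hasDerivWithinAt_Ici
    (fun x hx => (hu.differentiableOn two_ne_zero x hx).hasDerivWithinAt) hu'
  exact not_integrableOn_Ici_of_tendsto_atTop
    ((tendsto_rpow_atTop (zero_lt_one.trans hp)).comp (tendsto_abs_atBot_atTop.comp hu_atBot)) hint
end

section
/- Let lambda > 0 and c in R, and define for x >= 1 the function u_2(x) = (1/(2*sqrt(lambda))) * integral over t in [x, infinity) of e^{sqrt(lambda)(x-t)} / t dt + (1/(2*sqrt(lambda))) * integral over t in [1, x] of e^{-sqrt(lambda)(x-t)} / t dt + c * e^{-sqrt(lambda) x}. Then x * u_2(x) converges to 1/lambda as x -> infinity. -/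
/-!
Substituting `t = x + u` in the first integral and `t = x - u` in the second writes `x * u₂ x` as
`(2√λ)⁻¹ ∫₀^∞ e^{-√λ u} (x/(x+u) + 𝟙[u ≤ x-1] x/(x-u)) du + c x e^{-√λ x}`.
Both kernels tend to `1` pointwise and are bounded by `1 + u`, which is integrable against
`e^{-√λ u}`, so by dominated convergence the integral tends to `2/√λ`.
-/

open MeasureTheory Set Filter Real Topology

lemma tendsto_div_add_const_atTop_nhds_one (v : ℝ) :
    Tendsto (fun x : ℝ => x / (x + v)) atTop (𝓝 1) := by
  have h : Tendsto (fun x : ℝ => 1 - v / (x + v)) atTop (𝓝 (1 - 0)) :=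
    tendsto_const_nhds.sub
      (tendsto_const_nhds.div_atTop (tendsto_atTop_add_const_right _ v tendsto_id))
  rw [sub_zero] at h
  refine h.congr' ?_
  filter_upwards [eventually_gt_atTop (-v)] with x hx
  rw [eq_div_iff (by linarith), sub_mul, div_mul_cancel₀ _ (by linarith)]
  ring

lemma integrableOn_one_add_mul_exp_neg_mul {s : ℝ} (hs : 0 < s) :
    IntegrableOn (fun u => (1 + u) * exp (-s * u)) (Ioi 0) := by
  have hexp : IntegrableOn (fun u => exp (-s * u)) (Ioi 0) :=
    integrableOn_exp_mul_Ioi (neg_neg_of_pos hs) 0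
  have hmul : IntegrableOn (fun u => u * exp (-s * u)) (Ioi 0) := by
    simpa using integrableOn_rpow_mul_exp_neg_mul_rpow (s := 1) (p := 1) (by norm_num) one_pos hs
  refine (hexp.add hmul).congr_fun (fun u _ => ?_) measurableSet_Ioi
  simp only [Pi.add_apply]
  ring

lemma integral_exp_neg_mul_Ioi_zero {s : ℝ} (hs : 0 < s) :
    ∫ u in Ioi 0, exp (-s * u) = 1 / s := by
  rw [integral_exp_mul_Ioi (neg_neg_of_pos hs), mul_zero, exp_zero, div_neg, neg_div, neg_neg]

lemma tendsto_integral_exp_neg_mul_mul {ι : Type*} {l : Filter ι} [l.IsCountablyGenerated]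
    {s : ℝ} (hs : 0 < s) {g : ι → ℝ → ℝ}
    (hmeas : ∀ᶠ i in l, AEStronglyMeasurable (g i) (volume.restrict (Ioi 0)))
    (hbound : ∀ᶠ i in l, ∀ u > 0, |g i u| ≤ 1 + u)
    (hlim : ∀ u > 0, Tendsto (g · u) l (𝓝 1)) :
    Tendsto (fun i => ∫ u in Ioi 0, exp (-s * u) * g i u) l (𝓝 (1 / s)) := by
  rw [← integral_exp_neg_mul_Ioi_zero hs]
  refine tendsto_integral_filter_of_dominated_convergence _
    (hmeas.mono fun i hi => (Continuous.aestronglyMeasurable (by fun_prop)).mul hi) ?_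
    ((integrableOn_one_add_mul_exp_neg_mul hs).congr_fun (fun u _ => mul_comm _ _)
      measurableSet_Ioi) ?_
  · filter_upwards [hbound] with i hi
    filter_upwards [self_mem_ae_restrict measurableSet_Ioi] with u hu
    rw [norm_mul, norm_of_nonneg (exp_pos _).le, Real.norm_eq_abs]
    exact mul_le_mul_of_nonneg_left (hi u hu) (exp_pos _).le
  · filter_upwards [self_mem_ae_restrict measurableSet_Ioi] with u hu
    simpa using (hlim u hu).const_mul (exp (-s * u))

lemma tendsto_integral_exp_neg_mul_div_add {s : ℝ} (hs : 0 < s) :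
    Tendsto (fun x => ∫ u in Ioi 0, exp (-s * u) * (x / (x + u))) atTop (𝓝 (1 / s)) := by
  refine tendsto_integral_exp_neg_mul_mul hs (.of_forall fun x =>
    (Measurable.aestronglyMeasurable (by fun_prop))) ?_ fun u _ =>
    tendsto_div_add_const_atTop_nhds_one u
  filter_upwards [eventually_gt_atTop 0] with x hx u hu
  rw [abs_of_nonneg (by positivity)]
  calc x / (x + u) ≤ 1 := (div_le_one (by linarith)).2 (by linarith)
    _ ≤ 1 + u := by linarith

lemma tendsto_integral_exp_neg_mul_indicator_div_sub {s : ℝ} (hs : 0 < s) :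
    Tendsto (fun x =>
      ∫ u in Ioi 0, exp (-s * u) * (Iic (x - 1)).indicator (fun u => x / (x - u)) u)
      atTop (𝓝 (1 / s)) := by
  refine tendsto_integral_exp_neg_mul_mul hs (.of_forall fun x =>
    ((Measurable.indicator (by fun_prop) measurableSet_Iic).aestronglyMeasurable)) ?_ fun u _ => ?_
  · filter_upwards with x u hu
    by_cases hux : u ∈ Iic (x - 1)
    · have hux' := mem_Iic.1 hux
      rw [indicator_of_mem hux, abs_of_nonneg (div_nonneg (by linarith) (by linarith)),
        div_le_iff₀ (by linarith)]
      -- `(1 + u) * (x - u) - x = u * (x - 1 - u)`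
      nlinarith
    · rw [indicator_of_notMem hux, abs_zero]
      linarith
  · refine (tendsto_div_add_const_atTop_nhds_one (-u)).congr' ?_
    filter_upwards [eventually_ge_atTop (u + 1)] with x hx
    rw [indicator_of_mem (show u ∈ Iic (x - 1) from mem_Iic.2 (by linarith)), sub_eq_add_neg x u]

lemma mul_setIntegral_Ici_exp_div (s x : ℝ) :
    x * ∫ t in Ici x, exp (s * (x - t)) / t = ∫ u in Ioi 0, exp (-s * u) * (x / (x + u)) := by
  rw [integral_Ici_eq_integral_Ioi, ← integral_const_mul,
    ← (measurePreserving_add_right volume x).setIntegral_preimage_emb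
      (measurableEmbedding_addRight x), preimage_add_const_Ioi, sub_self]
  refine setIntegral_congr_fun measurableSet_Ioi fun u _ => ?_
  rw [show s * (x - (u + x)) = -s * u by ring]
  ring

lemma mul_setIntegral_Icc_exp_neg_div (s x : ℝ) :
    x * ∫ t in Icc 1 x, exp (-(s * (x - t))) / t =
      ∫ u in Ioi 0, exp (-s * u) * (Iic (x - 1)).indicator (fun u => x / (x - u)) u := by
  simp_rw [← indicator_mul_right (Iic (x - 1)) (fun u => exp (-s * u))]
  rw [setIntegral_indicator measurableSet_Iic, Ioi_inter_Iic, ← integral_Icc_eq_integral_Ioc,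
    ← integral_const_mul,
    ← (Measure.measurePreserving_sub_left volume x).setIntegral_preimage_emb
      (measurableEmbedding_subLeft x), preimage_const_sub_Icc, sub_self]
  refine setIntegral_congr_fun measurableSet_Icc fun u _ => ?_
  rw [show -(s * (x - (x - u))) = -s * u by ring]
  ring

/-- For `u₂` given by the variation-of-constants formula for `λ u - u'' = 1/x` on `[1, ∞)`,
`x * u₂ x → 1/λ` as `x → ∞`. -/
theorem x_mul_u2_tendsto (lam : ℝ) (hlam : 0 < lam) (c : ℝ)
    (u₂ : ℝ → ℝ)
    (hu₂ : ∀ x ≥ 1, u₂ x =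
        (1 / (2 * Real.sqrt lam)) * (∫ t in Ici x, Real.exp (Real.sqrt lam * (x - t)) / t)
      + (1 / (2 * Real.sqrt lam)) * (∫ t in Icc 1 x, Real.exp (-(Real.sqrt lam * (x - t))) / t)
      + c * Real.exp (-(Real.sqrt lam * x))) :
    Tendsto (fun x => x * u₂ x) atTop (nhds (1 / lam)) := by
  set s := √lam
  have hs : 0 < s := sqrt_pos.2 hlam
  have hdecay : Tendsto (fun x => x * exp (-s * x)) atTop (𝓝 0) := by
    simpa using tendsto_rpow_mul_exp_neg_mul_atTop_nhds_zero 1 s hs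
  have hlim := ((tendsto_integral_exp_neg_mul_div_add hs).add
    (tendsto_integral_exp_neg_mul_indicator_div_sub hs)).const_mul (1 / (2 * s)) |>.add
    (hdecay.const_mul c)
  have hval : 1 / (2 * s) * (1 / s + 1 / s) + c * 0 = 1 / lam := by
    rw [← sq_sqrt hlam.le]
    field_simp
    ring
  rw [hval] at hlim
  refine hlim.congr' ?_
  filter_upwards [eventually_ge_atTop 1] with x hx
  rw [hu₂ x hx, ← mul_setIntegral_Ici_exp_div, ← mul_setIntegral_Icc_exp_neg_div, neg_mul]
  ring
end

section
/- Let d, m be natural numbers, p in [1, infinity), and let V : R^d -> R^{m x m} be measurable with <V(x) xi, xi> <= 0 for almost every x in R^d and all xi in R^m. Let f : R^d -> C^m be measurable with both f and the pointwise matrix-vector product V f in L^p(R^d; C^m). Then for every lambda > 0 one has the dissipativity estimate ||lambda f - V f||_{L^p} >= lambda ||f||_{L^p}. -/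
/-!
Pointwise, if `Re ⟨V z, z⟩ ≤ 0` then Cauchy–Schwarz gives
`λ ‖z‖² ≤ Re ⟨z, λ z - V z⟩ ≤ ‖z‖ ‖λ z - V z‖`, i.e. `λ ‖z‖ ≤ ‖λ z - V z‖`.
For a real matrix acting on `z = x + i y` one has `Re ⟨V z, z⟩ = ⟨V x, x⟩ + ⟨V y, y⟩`,
so the hypothesis on real vectors suffices. The `L^p` estimate then follows by
monotonicity of the `L^p` norm.
-/

open MeasureTheory Matrix ENNReal

theorem mul_norm_le_norm_smul_sub_of_real_inner_nonpos {E : Type*} [NormedAddCommGroup E]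
    [InnerProductSpace ℝ E]
    {z w : E} (h : inner ℝ z w ≤ 0) (lam : ℝ) : lam * ‖z‖ ≤ ‖lam • z - w‖ := by
  have key : ‖z‖ * (lam * ‖z‖) ≤ ‖z‖ * ‖lam • z - w‖ :=
    calc ‖z‖ * (lam * ‖z‖) = inner ℝ z (lam • z) := by
          rw [real_inner_smul_right, real_inner_self_eq_norm_sq]; ring
      _ ≤ inner ℝ z (lam • z - w) := by rw [inner_sub_right]; linarith
      _ ≤ ‖z‖ * ‖lam • z - w‖ := real_inner_le_norm _ _
  rcases (norm_nonneg z).eq_or_lt with hz | hz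
  · rw [← hz, mul_zero]
    exact norm_nonneg _
  · exact le_of_mul_le_mul_left key hz

theorem EuclideanSpace.real_inner_eq_re_dotProduct_star {n : Type*} [Fintype n]
    (z w : EuclideanSpace ℂ n) : inner ℝ z w = (w.ofLp ⬝ᵥ star z.ofLp).re := by
  simp only [PiLp.inner_apply, Complex.inner, dotProduct, Complex.re_sum, Pi.star_apply,
    Complex.star_def]

theorem Matrix.re_map_ofReal_mulVec_dotProduct_star {n : Type*} [Fintype n] (A : Matrix n n ℝ)
    (z : n → ℂ) :
    (A.map (↑) *ᵥ z ⬝ᵥ star z).re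
      = A *ᵥ (fun i => (z i).re) ⬝ᵥ (fun i => (z i).re)
        + A *ᵥ (fun i => (z i).im) ⬝ᵥ (fun i => (z i).im) := by
  simp only [mulVec, dotProduct, map_apply, Pi.star_apply, Complex.re_sum, Complex.mul_re,
    Complex.star_def, Complex.conj_re, Complex.conj_im, Finset.sum_mul, ← Finset.sum_add_distrib]
  refine Finset.sum_congr rfl fun i _ => Finset.sum_congr rfl fun j _ => ?_
  simp only [Complex.mul_im, Complex.ofReal_re, Complex.ofReal_im]
  ring

theorem Matrix.real_inner_map_ofReal_mulVec_nonpos {n : Type*} [Fintype n] {A : Matrix n n ℝ}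
    (hA : ∀ ξ, A *ᵥ ξ ⬝ᵥ ξ ≤ 0) (z : EuclideanSpace ℂ n) :
    inner ℝ z (WithLp.toLp 2 (A.map (↑) *ᵥ z.ofLp)) ≤ 0 := by
  rw [EuclideanSpace.real_inner_eq_re_dotProduct_star, re_map_ofReal_mulVec_dotProduct_star]
  exact add_nonpos (hA _) (hA _)

theorem multiplication_operator_dissipative_general (d m : ℕ) (p : ℝ≥0∞)
    (V : (Fin d → ℝ) → Matrix (Fin m) (Fin m) ℝ)
    (hdiss : ∀ᵐ x ∂(volume : Measure (Fin d → ℝ)),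
      ∀ ξ : Fin m → ℝ, (V x).mulVec ξ ⬝ᵥ ξ ≤ 0)
    (f : (Fin d → ℝ) → EuclideanSpace ℂ (Fin m))
    (Vf : (Fin d → ℝ) → EuclideanSpace ℂ (Fin m))
    (hVf : ∀ x, Vf x = (WithLp.equiv 2 (Fin m → ℂ)).symm
      (((V x).map (Complex.ofReal ·)).mulVec (WithLp.equiv 2 (Fin m → ℂ) (f x))))
    (lam : ℝ) (hlam : 0 < lam) :
    ENNReal.ofReal lam * eLpNorm f p volume
      ≤ eLpNorm (fun x => lam • f x - Vf x) p volume := by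
  have hpointwise : ∀ᵐ x ∂volume, ‖lam • f x‖ ≤ ‖lam • f x - Vf x‖ := by
    filter_upwards [hdiss] with x hx
    rw [norm_smul_of_nonneg hlam.le, hVf x]
    exact mul_norm_le_norm_smul_sub_of_real_inner_nonpos
      (real_inner_map_ofReal_mulVec_nonpos hx (f x)) lam
  calc ENNReal.ofReal lam * eLpNorm f p volume
      = eLpNorm (lam • f) p volume := by
        rw [eLpNorm_const_smul, Real.enorm_of_nonneg hlam.le]
    _ ≤ eLpNorm (fun x => lam • f x - Vf x) p volume := eLpNorm_mono_ae hpointwise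

/-- Dissipativity of the multiplication operator `f ↦ V f` in `L^p(ℝ^d; ℂ^m)`:
if `⟨V(x)ξ, ξ⟩ ≤ 0` a.e., then `‖λ f - V f‖_p ≥ λ ‖f‖_p` for all `λ > 0`. -/
theorem multiplication_operator_dissipative (d m : ℕ) (p : ℝ≥0∞) (hp1 : 1 ≤ p) (hp2 : p ≠ ⊤)
    (V : (Fin d → ℝ) → Matrix (Fin m) (Fin m) ℝ)
    (hVmeas : ∀ k l, Measurable fun x => V x k l)
    (hdiss : ∀ᵐ x ∂(volume : Measure (Fin d → ℝ)),
      ∀ ξ : Fin m → ℝ, (V x).mulVec ξ ⬝ᵥ ξ ≤ 0)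
    (f : (Fin d → ℝ) → EuclideanSpace ℂ (Fin m)) (hf : MeasureTheory.StronglyMeasurable f)
    (hfLp : MemLp f p volume)
    (Vf : (Fin d → ℝ) → EuclideanSpace ℂ (Fin m))
    (hVf : ∀ x, Vf x = (WithLp.equiv 2 (Fin m → ℂ)).symm
      (((V x).map (Complex.ofReal ·)).mulVec (WithLp.equiv 2 (Fin m → ℂ) (f x))))
    (hVfLp : MemLp Vf p volume)
    (lam : ℝ) (hlam : 0 < lam) :
    ENNReal.ofReal lam * eLpNorm f p volume
      ≤ eLpNorm (fun x => lam • f x - Vf x) p volume :=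
  multiplication_operator_dissipative_general d m p V hdiss f Vf hVf lam hlam
end

section
/- Let d, m be natural numbers, let Q = (q_{ij}) : R^d -> R^{d x d} be a matrix-valued function with C^1 entries whose values are symmetric positive semidefinite matrices, and let u = (u_1, ..., u_m) : R^d -> R^m be C^2. Then at every point x in R^d one has sum_{k=1}^m div(Q grad u_k)(x) * u_k(x) <= (1/2) div(Q grad |u|^2)(x), where div(Q grad v) denotes sum_{i,j=1}^d D_i( q_{ij} D_j v ) and |u|^2 = sum_{k=1}^m u_k^2. -/
/-- The partial derivative in the `i`-th coordinate direction of `ℝ^d`. -/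
noncomputable def pd {d : ℕ} (i : Fin d) (f : (Fin d → ℝ) → ℝ) (x : Fin d → ℝ) : ℝ :=
  fderiv ℝ f x (Pi.single i 1)

/-- `div (Q ∇ f) = ∑ i j, D_i (q_{ij} D_j f)`. -/
noncomputable def divQgrad {d : ℕ} (q : Fin d → Fin d → (Fin d → ℝ) → ℝ)
    (f : (Fin d → ℝ) → ℝ) (x : Fin d → ℝ) : ℝ :=
  ∑ i, ∑ j, pd i (fun y => q i j y * pd j f y) x

/-!
Expanding `div(Q ∇ ·)` of a product by the Leibniz rule gives
`div(Q ∇ f²) = 2 f div(Q ∇ f) + 2 ⟨Q ∇ f, ∇ f⟩`, so half of `div(Q ∇ |u|²)` exceeds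
`∑ₖ div(Q ∇ uₖ) uₖ` by `∑ₖ ⟨Q ∇ uₖ, ∇ uₖ⟩ ≥ 0`.
-/

open Finset

section

variable {d : ℕ} {x : Fin d → ℝ}

theorem pd_add {f g : (Fin d → ℝ) → ℝ} (hf : DifferentiableAt ℝ f x)
    (hg : DifferentiableAt ℝ g x) (i : Fin d) :
    pd i (fun y => f y + g y) x = pd i f x + pd i g x := by
  simp only [pd, fderiv_fun_add hf hg, add_apply]

theorem pd_mul {f g : (Fin d → ℝ) → ℝ} (hf : DifferentiableAt ℝ f x)
    (hg : DifferentiableAt ℝ g x) (i : Fin d) :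
    pd i (fun y => f y * g y) x = pd i f x * g x + f x * pd i g x := by
  simp only [pd, fderiv_fun_mul hf hg, add_apply, smul_apply, smul_eq_mul]
  ring

theorem pd_sum {ι : Type*} {s : Finset ι} {f : ι → (Fin d → ℝ) → ℝ}
    (hf : ∀ k ∈ s, DifferentiableAt ℝ (f k) x) (i : Fin d) :
    pd i (fun y => ∑ k ∈ s, f k y) x = ∑ k ∈ s, pd i (f k) x := by
  simp only [pd, fderiv_fun_sum hf, _root_.sum_apply]

theorem contDiff_pd {f : (Fin d → ℝ) → ℝ} {m n : WithTop ℕ∞} (hf : ContDiff ℝ n f)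
    (hmn : m + 1 ≤ n) (j : Fin d) : ContDiff ℝ m (pd j f) :=
  (hf.fderiv_right hmn).clm_apply contDiff_const

theorem differentiable_pd {f : (Fin d → ℝ) → ℝ} (hf : ContDiff ℝ 2 f) (j : Fin d) :
    Differentiable ℝ (pd j f) :=
  (contDiff_pd (m := 1) hf (by norm_num) j).differentiable one_ne_zero

theorem pd_mul_pd_mul {c f g : (Fin d → ℝ) → ℝ} (hc : DifferentiableAt ℝ c x)
    (hf : ContDiff ℝ 2 f) (hg : ContDiff ℝ 2 g) (i j : Fin d) :
    pd i (fun y => c y * pd j (fun z => f z * g z) y) x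
      = pd i (fun y => c y * pd j f y) x * g x + f x * pd i (fun y => c y * pd j g y) x
        + (pd i f x * c x * pd j g x + pd i g x * c x * pd j f x) := by
  have hf₁ : Differentiable ℝ f := hf.differentiable two_ne_zero
  have hg₁ : Differentiable ℝ g := hg.differentiable two_ne_zero
  have hcf : DifferentiableAt ℝ (fun y => c y * pd j f y) x :=
    hc.fun_mul (differentiable_pd hf j x)
  have hcg : DifferentiableAt ℝ (fun y => c y * pd j g y) x :=
    hc.fun_mul (differentiable_pd hg j x)
  have hleibniz : (fun y => c y * pd j (fun z => f z * g z) y)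
      = fun y => (c y * pd j f y) * g y + f y * (c y * pd j g y) := by
    funext y
    rw [pd_mul (hf₁ y) (hg₁ y)]
    ring
  rw [hleibniz, pd_add (hcf.fun_mul (hg₁ x)) ((hf₁ x).fun_mul hcg), pd_mul hcf (hg₁ x),
    pd_mul (hf₁ x) hcg]
  ring

variable {q : Fin d → Fin d → (Fin d → ℝ) → ℝ}

theorem divQgrad_mul (hq : ∀ i j, DifferentiableAt ℝ (q i j) x) {f g : (Fin d → ℝ) → ℝ}
    (hf : ContDiff ℝ 2 f) (hg : ContDiff ℝ 2 g) :
    divQgrad q (fun y => f y * g y) x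
      = divQgrad q f x * g x + f x * divQgrad q g x
        + ∑ i, ∑ j, (pd i f x * q i j x * pd j g x + pd i g x * q i j x * pd j f x) := by
  simp only [divQgrad, pd_mul_pd_mul (hq _ _) hf hg, sum_add_distrib, sum_mul, mul_sum]

theorem divQgrad_sq (hq : ∀ i j, DifferentiableAt ℝ (q i j) x) {f : (Fin d → ℝ) → ℝ}
    (hf : ContDiff ℝ 2 f) :
    divQgrad q (fun y => f y ^ 2) x
      = 2 * (divQgrad q f x * f x + ∑ i, ∑ j, pd i f x * q i j x * pd j f x) := by
  simp only [sq, divQgrad_mul hq hf hf, ← two_mul, ← mul_sum]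
  ring

theorem divQgrad_sum (hq : ∀ i j, DifferentiableAt ℝ (q i j) x) {ι : Type*} {s : Finset ι}
    {f : ι → (Fin d → ℝ) → ℝ} (hf : ∀ k ∈ s, ContDiff ℝ 2 (f k)) :
    divQgrad q (fun y => ∑ k ∈ s, f k y) x = ∑ k ∈ s, divQgrad q (f k) x := by
  have hpd_sum : ∀ j, pd j (fun y => ∑ k ∈ s, f k y) = fun y => ∑ k ∈ s, pd j (f k) y :=
    fun j => funext fun y =>
      pd_sum (fun k hk => ((hf k hk).differentiable two_ne_zero) y) j
  have hpd_coeff_sum : ∀ i j, pd i (fun y => ∑ k ∈ s, q i j y * pd j (f k) y) x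
      = ∑ k ∈ s, pd i (fun y => q i j y * pd j (f k) y) x := fun i j =>
    pd_sum (fun k hk => (hq i j).fun_mul (differentiable_pd (hf k hk) j x)) i
  simp only [divQgrad, hpd_sum, mul_sum, hpd_coeff_sum]
  exact (sum_congr rfl fun _ _ => sum_comm).trans sum_comm

end

theorem divQgrad_dot_le_half_divQgrad_sq_general (d m : ℕ)
    (q : Fin d → Fin d → (Fin d → ℝ) → ℝ) (hq : ∀ i j, ContDiff ℝ 1 (q i j))
    (hpsd : ∀ (x : Fin d → ℝ) (ξ : Fin d → ℝ), 0 ≤ ∑ i, ∑ j, ξ i * q i j x * ξ j)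
    (u : Fin m → (Fin d → ℝ) → ℝ) (hu : ∀ k, ContDiff ℝ 2 (u k))
    (x : Fin d → ℝ) :
    ∑ k, divQgrad q (u k) x * u k x
      ≤ (1 / 2) * divQgrad q (fun z => ∑ k, u k z ^ 2) x := by
  have hqx : ∀ i j, DifferentiableAt ℝ (q i j) x :=
    fun i j => (hq i j).differentiable one_ne_zero x
  calc ∑ k, divQgrad q (u k) x * u k x
      ≤ ∑ k, (divQgrad q (u k) x * u k x
          + ∑ i, ∑ j, pd i (u k) x * q i j x * pd j (u k) x) :=
        sum_le_sum fun k _ => le_add_of_nonneg_right (hpsd x _)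
    _ = (1 / 2) * ∑ k, divQgrad q (fun z => u k z ^ 2) x := by
        rw [mul_sum]
        exact sum_congr rfl fun k _ => by rw [divQgrad_sq hqx (hu k)]; ring
    _ = (1 / 2) * divQgrad q (fun z => ∑ k, u k z ^ 2) x := by
        rw [divQgrad_sum hqx fun k _ => (hu k).pow 2]

/-- For `Q` symmetric positive semidefinite with `C¹` entries and `u : ℝ^d → ℝ^m` of class
`C²`, one has `∑ₖ div(Q ∇ uₖ) uₖ ≤ (1/2) div(Q ∇ |u|²)` pointwise. -/
theorem divQgrad_dot_le_half_divQgrad_sq (d m : ℕ)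
    (q : Fin d → Fin d → (Fin d → ℝ) → ℝ) (hq : ∀ i j, ContDiff ℝ 1 (q i j))
    (hsymm : ∀ i j x, q i j x = q j i x)
    (hpsd : ∀ (x : Fin d → ℝ) (ξ : Fin d → ℝ), 0 ≤ ∑ i, ∑ j, ξ i * q i j x * ξ j)
    (u : Fin m → (Fin d → ℝ) → ℝ) (hu : ∀ k, ContDiff ℝ 2 (u k))
    (x : Fin d → ℝ) :
    ∑ k, divQgrad q (u k) x * u k x
      ≤ (1 / 2) * divQgrad q (fun z => ∑ k, u k z ^ 2) x :=
  divQgrad_dot_le_half_divQgrad_sq_general d m q hq hpsd u hu x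
end
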